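/- arXiv:2604.25746 — 2 statements merged into one kernel-verified Lean document; each statement's English description precedes it below -/
import Mathlib

section
/- Let {T^t}_{t∈ℝ} be a measurable measure-preserving flow on a probability space (X, ℬ, μ), and let A ∈ ℬ. For τ > 0 and x ∈ X define m_τ^A(x) = (1/(2τ)) · Leb({t ∈ [−τ, τ] : T^t(x) ∈ A}). Then for μ-almost every x ∈ A, one has m_τ^A(x) → 1 as τ → 0⁺. -/
/-!
By the Lebesgue density theorem, almost every visit time `t` of the orbit of `x` to `A` is a
density point of the set of visit times, and by the flow property the density of the visit
times of `T t x` at `0` is the density of the visit times of `x` at `t`. Hence the set `B` of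
points of `A` where the density does not tend to `1` is visited by every orbit only during a
Lebesgue-null set of times, and Fubini together with the invariance of `μ` gives `μ B = 0`.
The set `B` is measurable because `τ ↦ τ · m_τ` is monotone, so the limit may be taken along
rational `τ`.
-/

open MeasureTheory Filter Set Metric Topology

theorem exists_rat_forall_div_mem_Ioo {a b : ℝ → ℝ} (hab : ∀ τ > 0, a τ < b τ) :
    ∃ r : ℝ → ℚ, ∀ τ > 0, (r τ : ℝ) / τ ∈ Ioo (a τ) (b τ) := by
  have hex (τ : ℝ) : ∃ q : ℚ, 0 < τ → (q : ℝ) / τ ∈ Ioo (a τ) (b τ) := by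
    by_cases hτ : 0 < τ
    · obtain ⟨q, h₁, h₂⟩ := exists_rat_btwn (mul_lt_mul_of_pos_right (hab τ hτ) hτ)
      exact ⟨q, fun _ => ⟨(lt_div_iff₀ hτ).2 h₁, (div_lt_iff₀ hτ).2 h₂⟩⟩
    · exact ⟨0, fun h => absurd h hτ⟩
  choose r hr using hex
  exact ⟨r, hr⟩

theorem tendsto_div_mul_comp_of_tendsto_rat {f : ℝ → ℝ} {L : ℝ}
    (hL : Tendsto (fun q : ℚ => f q) (comap ((↑) : ℚ → ℝ) (𝓝[>] 0)) (𝓝 L))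
    {r : ℝ → ℚ} (hr : Tendsto (fun τ => (r τ : ℝ) / τ) (𝓝[>] 0) (𝓝 1)) :
    Tendsto (fun τ => (r τ : ℝ) / τ * f (r τ)) (𝓝[>] 0) (𝓝 L) := by
  have hpos : ∀ᶠ τ in 𝓝[>] 0, 0 < (r τ : ℝ) := by
    filter_upwards [hr.eventually (lt_mem_nhds one_pos), self_mem_nhdsWithin]
      with τ hratio (hτ : 0 < τ)
    exact (div_pos_iff_of_pos_right hτ).1 hratio
  have hr₀ : Tendsto (fun τ => (r τ : ℝ)) (𝓝[>] 0) (𝓝[>] 0) := by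
    refine tendsto_nhdsWithin_iff.2 ⟨?_, hpos⟩
    have := (tendsto_nhdsWithin_of_tendsto_nhds tendsto_id).mul hr
    rw [zero_mul] at this
    refine this.congr' ?_
    filter_upwards [self_mem_nhdsWithin] with τ (hτ : 0 < τ)
    exact mul_div_cancel₀ _ hτ.ne'
  simpa using hr.mul (hL.comp (tendsto_comap_iff.2 hr₀))

theorem tendsto_nhdsGT_zero_of_tendsto_rat {f : ℝ → ℝ} {L : ℝ}
    (hf : MonotoneOn (fun τ => τ * f τ) (Ioi 0))
    (hL : Tendsto (fun q : ℚ => f q) (comap ((↑) : ℚ → ℝ) (𝓝[>] 0)) (𝓝 L)) :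
    Tendsto f (𝓝[>] 0) (𝓝 L) := by
  -- monotonicity squeezes `f τ` between the values `(q / τ) * f q` at rationals `q ≈ τ`
  have hsub : Tendsto (fun τ : ℝ => 1 - τ) (𝓝[>] 0) (𝓝 1) := by
    simpa using ((tendsto_id (x := 𝓝 (0 : ℝ))).const_sub 1).mono_left nhdsWithin_le_nhds
  have hadd : Tendsto (fun τ : ℝ => 1 + τ) (𝓝[>] 0) (𝓝 1) := by
    simpa using ((tendsto_id (x := 𝓝 (0 : ℝ))).const_add 1).mono_left nhdsWithin_le_nhds
  obtain ⟨lo, hlo⟩ := exists_rat_forall_div_mem_Ioo (a := (1 - ·)) (b := 1)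
    fun τ hτ => by simpa using hτ
  obtain ⟨hi, hhi⟩ := exists_rat_forall_div_mem_Ioo (a := 1) (b := (1 + ·))
    fun τ hτ => by simpa using hτ
  have hlo₁ : Tendsto (fun τ => (lo τ : ℝ) / τ) (𝓝[>] 0) (𝓝 1) :=
    tendsto_of_tendsto_of_tendsto_of_le_of_le' hsub tendsto_const_nhds
      (eventually_nhdsWithin_of_forall fun τ hτ => (hlo τ hτ).1.le)
      (eventually_nhdsWithin_of_forall fun τ hτ => (hlo τ hτ).2.le)
  have hhi₁ : Tendsto (fun τ => (hi τ : ℝ) / τ) (𝓝[>] 0) (𝓝 1) :=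
    tendsto_of_tendsto_of_tendsto_of_le_of_le' tendsto_const_nhds hadd
      (eventually_nhdsWithin_of_forall fun τ hτ => (hhi τ hτ).1.le)
      (eventually_nhdsWithin_of_forall fun τ hτ => (hhi τ hτ).2.le)
  refine tendsto_of_tendsto_of_tendsto_of_le_of_le' (tendsto_div_mul_comp_of_tendsto_rat hL hlo₁)
    (tendsto_div_mul_comp_of_tendsto_rat hL hhi₁) ?_ ?_
  · filter_upwards [Ioo_mem_nhdsGT one_pos] with τ ⟨hτ, hτ₁⟩
    obtain ⟨h₁, h₂⟩ := hlo τ hτ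
    have hlo₀ : 0 < (lo τ : ℝ) := (div_pos_iff_of_pos_right hτ).1 (by linarith)
    rw [div_mul_eq_mul_div, div_le_iff₀ hτ, mul_comm (f τ)]
    exact hf hlo₀ hτ ((div_lt_one hτ).1 h₂).le
  · filter_upwards [self_mem_nhdsWithin] with τ (hτ : 0 < τ)
    obtain ⟨h₁, -⟩ := hhi τ hτ
    rw [div_mul_eq_mul_div, le_div_iff₀ hτ, mul_comm (f τ)]
    exact hf hτ (hτ.trans ((one_lt_div hτ).1 h₁)) ((one_lt_div hτ).1 h₁).le

noncomputable def localDensity (S : Set ℝ) (s τ : ℝ) : ℝ :=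
  (volume (S ∩ closedBall s τ)).toReal / (2 * τ)

theorem monotoneOn_mul_localDensity (S : Set ℝ) (s : ℝ) :
    MonotoneOn (fun τ => τ * localDensity S s τ) (Ioi 0) := by
  have half (τ : ℝ) (hτ : 0 < τ) :
      τ * localDensity S s τ = (volume (S ∩ closedBall s τ)).toReal / 2 := by
    unfold localDensity
    field_simp
  intro a ha b hb hab
  simp only [half a ha, half b hb]
  gcongr
  exact (measure_mono inter_subset_right).trans_lt measure_closedBall_lt_top |>.ne

theorem localDensity_preimage_add_right (S : Set ℝ) (s : ℝ) :
    localDensity ((· + s) ⁻¹' S) 0 = localDensity S s := by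
  ext τ
  have hshift :
      (· + s) ⁻¹' S ∩ closedBall 0 τ = (· + s) ⁻¹' (S ∩ closedBall s τ) := by
    simp [preimage_inter]
  rw [localDensity, hshift, measure_preimage_add_right, localDensity]

theorem ae_tendsto_localDensity {S : Set ℝ} (hS : MeasurableSet S) :
    ∀ᵐ s, s ∈ S → Tendsto (localDensity S s) (𝓝[>] 0) (𝓝 1) := by
  filter_upwards [Besicovitch.ae_tendsto_measure_inter_div_of_measurableSet volume hS]
    with s hs hsS
  rw [indicator_of_mem hsS, Pi.one_apply] at hs
  refine ((ENNReal.tendsto_toReal ENNReal.one_ne_top).comp hs).congr' ?_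
  filter_upwards [self_mem_nhdsWithin] with τ (hτ : 0 < τ)
  simp [localDensity, ENNReal.toReal_div, Real.volume_closedBall, hτ.le]

theorem measurableSet_setOf_tendsto_localDensity {X : Type*} [MeasurableSpace X]
    {W : Set (ℝ × X)} (hW : MeasurableSet W) (L : ℝ) :
    MeasurableSet {x | Tendsto (localDensity ((·, x) ⁻¹' W) 0) (𝓝[>] 0) (𝓝 L)} := by
  have hrat (x : X) : Tendsto (localDensity ((·, x) ⁻¹' W) 0) (𝓝[>] 0) (𝓝 L) ↔
      Tendsto (fun q : ℚ => localDensity ((·, x) ⁻¹' W) 0 q)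
        (comap ((↑) : ℚ → ℝ) (𝓝[>] 0)) (𝓝 L) :=
    ⟨fun h => h.comp tendsto_comap,
      tendsto_nhdsGT_zero_of_tendsto_rat (monotoneOn_mul_localDensity _ _)⟩
  simp_rw [hrat]
  refine measurableSet_tendsto _ fun q => ?_
  have hWq : MeasurableSet (W ∩ Prod.fst ⁻¹' closedBall 0 (q : ℝ)) :=
    hW.inter (measurable_fst measurableSet_closedBall)
  exact (measurable_measure_prodMk_right hWq).ennreal_toReal.div_const _

section Flow

variable {X : Type*} (T : ℝ → X → X)

def visitTimes (B : Set X) (x : X) : Set ℝ := {t | T t x ∈ B}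

variable {T}

theorem visitTimes_apply_flow (hTadd : ∀ s t : ℝ, T (t + s) = T t ∘ T s) (B : Set X) (s : ℝ)
    (x : X) :
    visitTimes T B (T s x) = (· + s) ⁻¹' visitTimes T B x := by
  ext t
  simp [visitTimes, hTadd s t]

theorem measure_eq_zero_of_ae_volume_visitTimes_eq_zero [MeasurableSpace X] {μ : Measure X}
    [SFinite μ] (hT : Measurable fun p : ℝ × X => T p.1 p.2)
    (hTpres : ∀ t, MeasurePreserving (T t) μ μ)
    {B : Set X} (hB : MeasurableSet B) (h : ∀ᵐ x ∂μ, volume (visitTimes T B x) = 0) :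
    μ B = 0 := by
  have hB' : MeasurableSet {p : X × ℝ | T p.2 p.1 ∉ B} :=
    ((hT.comp measurable_swap) hB).compl
  have hswap : ∀ᵐ t, ∀ᵐ x ∂μ, T t x ∉ B := by
    rw [← Measure.ae_ae_comm hB']
    simpa only [measure_eq_zero_iff_ae_notMem, visitTimes, mem_ofPred_eq] using h
  obtain ⟨t, ht⟩ := hswap.exists
  rw [← (hTpres t).measure_preimage hB.nullMeasurableSet]
  exact measure_eq_zero_iff_ae_notMem.2 ht

end Flow

theorem local_time_density_tendsto_one_general
    {X : Type*} [MeasurableSpace X] (μ : Measure X) [IsProbabilityMeasure μ]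
    (T : ℝ → X → X)
    (hTadd : ∀ s t : ℝ, T (t + s) = T t ∘ T s)
    (hTmeas : Measurable fun p : ℝ × X => T p.1 p.2)
    (hTpres : ∀ t : ℝ, MeasurePreserving (T t) μ μ)
    (A : Set X) (hA : MeasurableSet A) :
    ∀ᵐ x ∂μ, x ∈ A →
      Tendsto (fun τ : ℝ =>
          (1 / (2 * τ)) * (volume {t : ℝ | t ∈ Icc (-τ) τ ∧ T t x ∈ A}).toReal)
        (nhdsWithin 0 (Ioi 0)) (nhds 1) := by
  set G := {y | Tendsto (localDensity (visitTimes T A y) 0) (𝓝[>] 0) (𝓝 1)}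
  have hG : MeasurableSet G := measurableSet_setOf_tendsto_localDensity (hTmeas hA) 1
  have hbad : μ (A \ G) = 0 := by
    refine measure_eq_zero_of_ae_volume_visitTimes_eq_zero hTmeas hTpres (hA.diff hG)
      (ae_of_all _ fun x => ?_)
    have hE : MeasurableSet (visitTimes T A x) := hTmeas.comp measurable_prodMk_right hA
    have hnull := ae_iff.1 (ae_tendsto_localDensity hE)
    refine measure_mono_null (fun t ht => ?_) hnull
    intro hdensity
    apply ht.2
    show Tendsto (localDensity (visitTimes T A (T t x)) 0) _ _
    rw [visitTimes_apply_flow hTadd, localDensity_preimage_add_right]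
    exact hdensity ht.1
  filter_upwards [measure_eq_zero_iff_ae_notMem.1 hbad] with x hx hxA
  refine (not_not.1 fun hxG => hx ⟨hxA, hxG⟩).congr fun τ => ?_
  rw [localDensity, one_div_mul_eq_div, Real.closedBall_eq_Icc, zero_sub, zero_add, inter_comm]
  rfl

theorem local_time_density_tendsto_one
    {X : Type*} [MeasurableSpace X] (μ : Measure X) [IsProbabilityMeasure μ]
    (T : ℝ → X → X)
    (hT0 : T 0 = id) (hTadd : ∀ s t : ℝ, T (t + s) = T t ∘ T s)
    (hTmeas : Measurable fun p : ℝ × X => T p.1 p.2)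
    (hTpres : ∀ t : ℝ, MeasurePreserving (T t) μ μ)
    (A : Set X) (hA : MeasurableSet A) :
    ∀ᵐ x ∂μ, x ∈ A →
      Tendsto (fun τ : ℝ =>
          (1 / (2 * τ)) * (volume {t : ℝ | t ∈ Icc (-τ) τ ∧ T t x ∈ A}).toReal)
        (nhdsWithin 0 (Ioi 0)) (nhds 1) :=
  local_time_density_tendsto_one_general μ T hTadd hTmeas hTpres A hA
end

section
/- Let {T^t}_{t∈ℝ} be a measurable measure-preserving flow on a probability space (X, ℬ, μ), and let A ∈ ℬ. For τ > 0 and x ∈ X define m_τ^A(x) = (1/(2τ)) · Leb({t ∈ [−τ, τ] : T^t(x) ∈ A}). Then lim_{τ→0⁺} ∫_A m_τ^A(x) dμ(x) = μ(A). -/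
/-!
With `g = 1_A`, the quantity is `∫ g(x) · ⨍_{[-τ,τ]} g(Tᵘx) du dμ = ∫ G_τ dμ`. Since
`G_τ(Tˢx) = g(Tˢx) · ⨍_{[-τ,τ]} g(Tᵘ⁺ˢx) du` and `μ` is invariant, the time origin `s` may be
averaged over `[0, 1]`: `∫ G_τ dμ = ∫_X ∫_0^1 G_τ(Tˢx) ds dμ`. For fixed `x`, the inner integral is
`∫_0^1 f(s) · ⨍_{[s-τ,s+τ]} f` with `f(t) = g(Tᵗx)` bounded, so the Lebesgue differentiation theorem
and dominated convergence send it to `∫_0^1 f²`. Dominated convergence over `X` and invariance once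
more give the limit `∫ g² dμ = μ A`. No continuity of `t ↦ μ(A ∩ T⁻ᵗA)` is needed.
-/

open MeasureTheory Filter Set
open scoped Topology

section SetAverage

variable {α E : Type*} [MeasurableSpace α] [NormedAddCommGroup E] [NormedSpace ℝ E]

theorem norm_setAverage_le {μ : Measure α} {s : Set α} {f : α → E} {C : ℝ} (hC : 0 ≤ C)
    (hf : ∀ x ∈ s, ‖f x‖ ≤ C) : ‖⨍ x in s, f x ∂μ‖ ≤ C := by
  rw [setAverage_eq, norm_smul, Real.norm_of_nonneg (inv_nonneg.2 measureReal_nonneg)]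
  rcases eq_top_or_lt_top (μ s) with hs | hs
  · simp [measureReal_def, hs, hC]
  rcases eq_or_ne (μ.real s) 0 with h0 | h0
  · simp [h0, hC]
  calc (μ.real s)⁻¹ * ‖∫ x in s, f x ∂μ‖ ≤ (μ.real s)⁻¹ * (C * μ.real s) :=
        mul_le_mul_of_nonneg_left (norm_setIntegral_le_of_norm_le_const hs hf)
          (inv_nonneg.2 measureReal_nonneg)
    _ = C := by field_simp

theorem norm_mul_setAverage_le {μ : Measure α} {s : Set α} {f : α → ℝ} {a C : ℝ} (ha : ‖a‖ ≤ C)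
    (hf : ∀ x ∈ s, ‖f x‖ ≤ C) : ‖a * ⨍ x in s, f x ∂μ‖ ≤ C * C := by
  have hC : 0 ≤ C := (norm_nonneg a).trans ha
  rw [norm_mul]
  exact mul_le_mul ha (norm_setAverage_le hC hf) (norm_nonneg _) hC

theorem setAverage_indicator_one {μ : Measure α} {s t : Set α} (ht : MeasurableSet t) :
    ⨍ x in s, t.indicator (1 : α → ℝ) x ∂μ = μ.real (s ∩ t) / μ.real s := by
  rw [setAverage_eq, integral_indicator_one ht, measureReal_restrict_apply ht, inter_comm,
    smul_eq_mul, inv_mul_eq_div]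

theorem MeasureTheory.StronglyMeasurable.setAverage_prod_right' {β : Type*} [MeasurableSpace β]
    {ν : Measure β} [SFinite ν] {f : α × β → E} (hf : StronglyMeasurable f) (s : Set β) :
    StronglyMeasurable fun x => ⨍ y in s, f (x, y) ∂ν := by
  simp_rw [setAverage_eq]
  exact (hf.integral_prod_right' (ν := ν.restrict s)).const_smul _

end SetAverage

section LebesgueDifferentiation

variable {E : Type*} [NormedAddCommGroup E] [NormedSpace ℝ E]

theorem setAverage_Icc_comp_add_right (f : ℝ → E) (s τ : ℝ) :
    ⨍ u in Icc (-τ) τ, f (u + s) = ⨍ t in Icc (s - τ) (s + τ), f t := by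
  have hpre : (fun u => u + s) ⁻¹' Icc (s - τ) (s + τ) = Icc (-τ) τ := by
    rw [preimage_add_const_Icc]; congr 1 <;> ring
  rw [setAverage_eq, setAverage_eq, ← hpre, measureReal_def, measureReal_def,
    measure_preimage_add_right,
    (measurePreserving_add_right volume s).setIntegral_preimage_emb
      (measurableEmbedding_addRight s)]

theorem ae_tendsto_setAverage_Icc_comp_add [CompleteSpace E] {f : ℝ → E}
    (hf : LocallyIntegrable f) :
    ∀ᵐ s, Tendsto (fun τ => ⨍ u in Icc (-τ) τ, f (u + s)) (𝓝[>] 0) (𝓝 (f s)) := by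
  filter_upwards [IsUnifLocDoublingMeasure.ae_tendsto_average volume hf 1] with s hs
  simp_rw [setAverage_Icc_comp_add_right, ← Real.closedBall_eq_Icc]
  refine hs (fun _ => s) id tendsto_id ?_
  filter_upwards [self_mem_nhdsWithin] with τ hτ
  simpa using le_of_lt hτ

end LebesgueDifferentiation

theorem tendsto_integral_mul_setAverage_Icc_comp_add {f : ℝ → ℝ} {C : ℝ} (hf : Measurable f)
    (hfC : ∀ t, ‖f t‖ ≤ C) {ν : Measure ℝ} [IsFiniteMeasure ν] (hν : ν ≪ volume) :
    Tendsto (fun τ => ∫ s, f s * (⨍ u in Icc (-τ) τ, f (u + s)) ∂ν) (𝓝[>] 0)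
      (𝓝 (∫ s, f s ^ 2 ∂ν)) := by
  have hloc : LocallyIntegrable f :=
    (memLp_top_of_bound hf.aestronglyMeasurable C (ae_of_all _ hfC)).locallyIntegrable le_top
  have h_avg_meas (τ : ℝ) : StronglyMeasurable fun s => ⨍ u in Icc (-τ) τ, f (u + s) :=
    (hf.comp (measurable_snd.add measurable_fst)).stronglyMeasurable.setAverage_prod_right' _
  refine tendsto_integral_filter_of_dominated_convergence (fun _ => C * C)
    (.of_forall fun τ => (hf.stronglyMeasurable.mul (h_avg_meas τ)).aestronglyMeasurable)
    (.of_forall fun τ => ae_of_all _ fun s => norm_mul_setAverage_le (hfC s) fun u _ => hfC _)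
    (integrable_const (C * C)) ?_
  filter_upwards [hν.ae_le (ae_tendsto_setAverage_Icc_comp_add hloc)] with s hs
  simpa only [sq] using hs.const_mul (f s)

section Flow

variable {X Y : Type*} [MeasurableSpace X] [MeasurableSpace Y] {μ : Measure X} {ν : Measure Y}
  {T : Y → X → X}

theorem measurePreserving_prod_of_forall [SFinite μ] [IsProbabilityMeasure ν]
    (hT : Measurable fun p : Y × X => T p.1 p.2) (hTpres : ∀ t, MeasurePreserving (T t) μ μ) :
    MeasurePreserving (fun p : X × Y => T p.2 p.1) (μ.prod ν) μ := by
  have hmeas : Measurable fun p : X × Y => T p.2 p.1 := hT.comp measurable_swap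
  refine ⟨hmeas, Measure.ext fun B hB => ?_⟩
  rw [Measure.map_apply hmeas hB, Measure.prod_apply_symm (hmeas hB)]
  simp_rw [preimage_preimage, fun y => (hTpres y).measure_preimage hB.nullMeasurableSet]
  simp

theorem integral_integral_comp_eq_integral {E : Type*} [NormedAddCommGroup E] [NormedSpace ℝ E]
    [SFinite μ] [IsProbabilityMeasure ν]
    (hT : Measurable fun p : Y × X => T p.1 p.2) (hTpres : ∀ t, MeasurePreserving (T t) μ μ)
    {G : X → E} (hG : Integrable G μ) :
    ∫ x, ∫ y, G (T y x) ∂ν ∂μ = ∫ x, G x ∂μ := by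
  have hΦ := measurePreserving_prod_of_forall (ν := ν) hT hTpres
  rw [← hΦ.map_eq] at hG
  calc ∫ x, ∫ y, G (T y x) ∂ν ∂μ = ∫ p, G (T p.2 p.1) ∂(μ.prod ν) :=
        (integral_prod _ (hG.comp_measurable hΦ.measurable)).symm
    _ = ∫ x, G x ∂μ := by
        rw [← integral_map hΦ.measurable.aemeasurable hG.aestronglyMeasurable, hΦ.map_eq]

end Flow

theorem tendsto_integral_mul_setAverage_flow {X : Type*} [MeasurableSpace X] {μ : Measure X}
    [IsFiniteMeasure μ] {T : ℝ → X → X} (hTadd : ∀ s t : ℝ, T (t + s) = T t ∘ T s)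
    (hT : Measurable fun p : ℝ × X => T p.1 p.2) (hTpres : ∀ t, MeasurePreserving (T t) μ μ)
    {g : X → ℝ} {C : ℝ} (hg : Measurable g) (hgC : ∀ x, ‖g x‖ ≤ C) :
    Tendsto (fun τ => ∫ x, g x * (⨍ u in Icc (-τ) τ, g (T u x)) ∂μ) (𝓝[>] 0)
      (𝓝 (∫ x, g x ^ 2 ∂μ)) := by
  set G : ℝ → X → ℝ := fun τ y => g y * ⨍ u in Icc (-τ) τ, g (T u y)
  have hG_meas (τ : ℝ) : Measurable (G τ) :=
    hg.mul (StronglyMeasurable.setAverage_prod_right'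
      (hg.comp (hT.comp measurable_swap)).stronglyMeasurable _).measurable
  have hG_bound (τ : ℝ) (y : X) : ‖G τ y‖ ≤ C * C :=
    norm_mul_setAverage_le (hgC y) fun u _ => hgC _
  have hg_sq : Integrable (fun x => g x ^ 2) μ :=
    .of_bound (hg.pow_const 2).aestronglyMeasurable (C * C) (ae_of_all _ fun x => by
      simpa [sq] using mul_le_mul (hgC x) (hgC x) (norm_nonneg _) ((norm_nonneg _).trans (hgC x)))
  let ν : Measure ℝ := volume.restrict (Icc 0 1)
  have : IsProbabilityMeasure ν := ⟨by simp [ν]⟩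
  have h_origin (τ : ℝ) : ∫ x, G τ x ∂μ = ∫ x, ∫ s, G τ (T s x) ∂ν ∂μ :=
    (integral_integral_comp_eq_integral hT hTpres
      (.of_bound (hG_meas τ).aestronglyMeasurable _ (ae_of_all _ (hG_bound τ)))).symm
  have h_pointwise (x : X) :
      Tendsto (fun τ => ∫ s, G τ (T s x) ∂ν) (𝓝[>] 0) (𝓝 (∫ s, g (T s x) ^ 2 ∂ν)) := by
    have h_orbit (s u : ℝ) : T u (T s x) = T (u + s) x := by rw [hTadd]; rfl
    simp only [G, h_orbit]
    exact tendsto_integral_mul_setAverage_Icc_comp_add (hg.comp (hT.comp measurable_prodMk_right))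
      (fun t => hgC _) Measure.restrict_le_self.absolutelyContinuous
  have h_inner_meas (τ : ℝ) : StronglyMeasurable fun x => ∫ s, G τ (T s x) ∂ν :=
    ((hG_meas τ).comp (hT.comp measurable_swap)).stronglyMeasurable.integral_prod_right'
  have h_inner_bound (τ : ℝ) (x : X) : ‖∫ s, G τ (T s x) ∂ν‖ ≤ C * C := by
    simpa using norm_integral_le_of_norm_le_const (ae_of_all ν fun s => hG_bound τ (T s x))
  have h_lim := tendsto_integral_filter_of_dominated_convergence (fun _ => C * C)
    (.of_forall fun τ => (h_inner_meas τ).aestronglyMeasurable)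
    (.of_forall fun τ => ae_of_all μ (h_inner_bound τ)) (integrable_const _)
    (ae_of_all _ h_pointwise)
  rw [integral_integral_comp_eq_integral hT hTpres hg_sq] at h_lim
  exact h_lim.congr fun τ => (h_origin τ).symm

theorem setAverage_Icc_indicator_comp {X : Type*} [MeasurableSpace X] {f : ℝ → X} {A : Set X}
    (hA : MeasurableSet (f ⁻¹' A)) {τ : ℝ} (hτ : 0 ≤ τ) :
    ⨍ u in Icc (-τ) τ, A.indicator (1 : X → ℝ) (f u) =
      (1 / (2 * τ)) * (volume {t : ℝ | t ∈ Icc (-τ) τ ∧ f t ∈ A}).toReal := by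
  simp_rw [← indicator_comp_right f (g := (1 : X → ℝ)), Pi.one_comp,
    setAverage_indicator_one hA, Real.volume_real_Icc_of_le (neg_le_self hτ), measureReal_def,
    one_div, ← div_eq_inv_mul]
  congr 1
  ring

theorem integral_local_time_density_tendsto_measure_general
    {X : Type*} [MeasurableSpace X] (μ : Measure X) [IsProbabilityMeasure μ]
    (T : ℝ → X → X)
    (hTadd : ∀ s t : ℝ, T (t + s) = T t ∘ T s)
    (hTmeas : Measurable fun p : ℝ × X => T p.1 p.2)
    (hTpres : ∀ t : ℝ, MeasurePreserving (T t) μ μ)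
    (A : Set X) (hA : MeasurableSet A) :
    Tendsto (fun τ : ℝ =>
        ∫ x in A, (1 / (2 * τ)) * (volume {t : ℝ | t ∈ Icc (-τ) τ ∧ T t x ∈ A}).toReal ∂μ)
      (nhdsWithin 0 (Ioi 0)) (nhds (μ A).toReal) := by
  have h_lim := tendsto_integral_mul_setAverage_flow hTadd hTmeas hTpres
    (measurable_one.indicator hA) (C := 1) fun x => by
      by_cases hx : x ∈ A <;> simp [hx]
  have h_sq : ∫ x, A.indicator (1 : X → ℝ) x ^ 2 ∂μ = (μ A).toReal := by
    have h_idem (x : X) : A.indicator (1 : X → ℝ) x ^ 2 = A.indicator 1 x := by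
      by_cases hx : x ∈ A <;> simp [hx]
    simp_rw [h_idem, integral_indicator_one hA, measureReal_def]
  rw [h_sq] at h_lim
  refine h_lim.congr' ?_
  filter_upwards [self_mem_nhdsWithin] with τ (hτ : 0 < τ)
  rw [← integral_indicator hA]
  refine integral_congr_ae (ae_of_all _ fun x => ?_)
  have h_hits : MeasurableSet ((T · x) ⁻¹' A) := hTmeas.comp measurable_prodMk_right hA
  by_cases hx : x ∈ A <;> simp [hx, setAverage_Icc_indicator_comp h_hits hτ.le]

theorem integral_local_time_density_tendsto_measure
    {X : Type*} [MeasurableSpace X] (μ : Measure X) [IsProbabilityMeasure μ]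
    (T : ℝ → X → X)
    (hT0 : T 0 = id) (hTadd : ∀ s t : ℝ, T (t + s) = T t ∘ T s)
    (hTmeas : Measurable fun p : ℝ × X => T p.1 p.2)
    (hTpres : ∀ t : ℝ, MeasurePreserving (T t) μ μ)
    (A : Set X) (hA : MeasurableSet A) :
    Tendsto (fun τ : ℝ =>
        ∫ x in A, (1 / (2 * τ)) * (volume {t : ℝ | t ∈ Icc (-τ) τ ∧ T t x ∈ A}).toReal ∂μ)
      (nhdsWithin 0 (Ioi 0)) (nhds (μ A).toReal) :=
  integral_local_time_density_tendsto_measure_general μ T hTadd hTmeas hTpres A hA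
end
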